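/- Let F = {id_{i,j} : 0 < i ≤ j} be the minimal function domain and let Γ be a maximal consistent set in SLKVF + CHOO + EQU. Define the equivalence relation c ∼ d ⟺ Kf({c},d) ∈ Γ on Q (an equivalence by PROJ, EQU, TRAN), with [c] its classes and [Γ_Kv] = {[c] : Kv(c) ∈ Γ}. Suppose u, v : Q/∼ → G are injections such that u([c]) = v([c]) ⟺ [c] ∈ [Γ_Kv], and define V_p(t,d) = t([d]) for t ∈ {u,v}. Then for any d ∈ Q and finite C ⊆ Q: (1) if Kv(d) ∈ Γ there is x ∈ G with V_p(t,d) = x for all t ∈ {u,v}; (2) if Kv(d) ∉ Γ then V_p(u,d) ≠ V_p(v,d); (3) if Kf(C,d) ∈ Γ there is f ∈ F with f(V_p(t,C)) = V_p(t,d) for both t ∈ {u,v}; (4) if Kf(C,d) ∉ Γ then for every f ∈ F there is t ∈ {u,v} with f(V_p(t,C)) ≠ V_p(t,d). -/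

import Mathlib

open scoped Classical

/-! Single-agent language `LKVF` with operators `Kv`, `Kf` and `K`. -/

inductive Formula (P Q : Type) : Type where
  | top : Formula P Q
  | atom : P → Formula P Q
  | Kv : Q → Formula P Q
  | Kf : Finset Q → Q → Formula P Q
  | and : Formula P Q → Formula P Q → Formula P Q
  | not : Formula P Q → Formula P Q
  | K : Formula P Q → Formula P Q

namespace Formula

variable {P Q : Type}

/-- Material implication, defined from `and` and `not`. -/
def imp (φ ψ : Formula P Q) : Formula P Q := Formula.not (Formula.and φ (Formula.not ψ))

/-- Falsum. -/
def bot : Formula P Q := Formula.not Formula.top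

/-- Disjunction. -/
def or (φ ψ : Formula P Q) : Formula P Q :=
  Formula.not (Formula.and (Formula.not φ) (Formula.not ψ))

end Formula

variable {P Q G : Type}

/-- Finite conjunction of a list of formulas. -/
def conj : List (Formula P Q) → Formula P Q
  | [] => Formula.top
  | φ :: l => Formula.and φ (conj l)

/-- Finite disjunction of a list of formulas. -/
def disj : List (Formula P Q) → Formula P Q
  | [] => Formula.bot
  | φ :: l => Formula.or φ (disj l)

/-- `φ` is a propositional tautology: every Boolean valuation commuting with the
Boolean connectives makes it true. -/
def IsTaut (φ : Formula P Q) : Prop :=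
  ∀ v : Formula P Q → Bool,
    v Formula.top = true →
    (∀ α β, v (Formula.and α β) = (v α && v β)) →
    (∀ α, v (Formula.not α) = (! v α)) →
    v φ = true

section Axioms

variable (P Q : Type) [LinearOrder Q]

/-- `⋀_{d ∈ D} Kf(C,d)`. -/
def finConjKf (C D : Finset Q) : Formula P Q :=
  conj ((D.sort (· ≤ ·)).map fun d => Formula.Kf C d)

/-- `⋀_{c ∈ C} Kv(c)`. -/
def finConjKv (C : Finset Q) : Formula P Q :=
  conj ((C.sort (· ≤ ·)).map fun c => Formula.Kv c)

/-- The axioms of the base system `SLKVF`. -/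
inductive SLKVF : Formula P Q → Prop where
  | taut {φ : Formula P Q} : IsTaut φ → SLKVF φ
  | axK (φ ψ : Formula P Q) :
      SLKVF (Formula.imp (Formula.K (Formula.imp φ ψ))
        (Formula.imp (Formula.K φ) (Formula.K ψ)))
  | axT (φ : Formula P Q) : SLKVF (Formula.imp (Formula.K φ) φ)
  | ax4 (φ : Formula P Q) : SLKVF (Formula.imp (Formula.K φ) (Formula.K (Formula.K φ)))
  | ax5 (φ : Formula P Q) :
      SLKVF (Formula.imp (Formula.not (Formula.K φ)) (Formula.K (Formula.not (Formula.K φ))))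
  | kv4 (d : Q) : SLKVF (Formula.imp (Formula.Kv d) (Formula.K (Formula.Kv d)))
  | kv5 (d : Q) :
      SLKVF (Formula.imp (Formula.not (Formula.Kv d)) (Formula.K (Formula.not (Formula.Kv d))))
  | kf4 (C : Finset Q) (d : Q) :
      SLKVF (Formula.imp (Formula.Kf C d) (Formula.K (Formula.Kf C d)))
  | kf5 (C : Finset Q) (d : Q) :
      SLKVF (Formula.imp (Formula.not (Formula.Kf C d))
        (Formula.K (Formula.not (Formula.Kf C d))))
  | proj {C : Finset Q} {c : Q} : c ∈ C → SLKVF (Formula.Kf C c)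
  | tran (C D : Finset Q) (e : Q) :
      SLKVF (Formula.imp (Formula.and (finConjKf P Q C D) (Formula.Kf D e)) (Formula.Kf C e))
  | vf (C : Finset Q) (d : Q) :
      SLKVF (Formula.imp (Formula.and (finConjKv P Q C) (Formula.Kf C d)) (Formula.Kv d))

end Axioms

/-- Provability from an axiom set `Ax` with rules modus ponens and necessitation. -/
inductive Prov (Ax : Formula P Q → Prop) : Formula P Q → Prop where
  | ax {φ : Formula P Q} : Ax φ → Prov Ax φ
  | mp {φ ψ : Formula P Q} : Prov Ax (Formula.imp φ ψ) → Prov Ax φ → Prov Ax ψ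
  | nec {φ : Formula P Q} : Prov Ax φ → Prov Ax (Formula.K φ)

/-- `Γ` is consistent: no finite conjunction of its members proves `⊥`. -/
def Consistent (Ax : Formula P Q → Prop) (Γ : Set (Formula P Q)) : Prop :=
  ¬ ∃ L : List (Formula P Q), (∀ φ ∈ L, φ ∈ Γ) ∧ Prov Ax (Formula.imp (conj L) Formula.bot)

/-- `Γ` is maximal consistent. -/
def MCS (Ax : Formula P Q → Prop) (Γ : Set (Formula P Q)) : Prop :=
  Consistent Ax Γ ∧ ∀ φ : Formula P Q, φ ∈ Γ ∨ Formula.not φ ∈ Γ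

/-! Function domains: sets of finitary functions on the value domain `G`. -/

/-- A function domain on `G`: a set of `n`-ary functions on `G` for various `n`. -/
abbrev FnDom (G : Type) : Type := Set (Σ n : ℕ, (Fin n → G) → G)

/-- `F` contains all projection functions `id_{i,j}` for `0 < i ≤ j`. -/
def hasProjections (F : FnDom G) : Prop :=
  ∀ (j : ℕ) (k : Fin j), (⟨j, fun x => x k⟩ : Σ n : ℕ, (Fin n → G) → G) ∈ F

/-- `F` is closed under composition: for an `n`-ary `f ∈ F` with `n ≥ 1` and
`m`-ary `g₁, …, gₙ ∈ F`, the composition `f(g₁(·),…,gₙ(·))` is in `F`. -/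
def closedComp (F : FnDom G) : Prop :=
  ∀ (n m : ℕ), 0 < n → ∀ f : (Fin n → G) → G,
    (⟨n, f⟩ : Σ n : ℕ, (Fin n → G) → G) ∈ F →
    ∀ g : Fin n → (Fin m → G) → G,
      (∀ k, (⟨m, g k⟩ : Σ n : ℕ, (Fin n → G) → G) ∈ F) →
      (⟨m, fun x => f fun k => g k x⟩ : Σ n : ℕ, (Fin n → G) → G) ∈ F

/-- The tuple of values of the variables of the finite set `C`, in the fixed
(increasing) order of its elements. -/
def tupleV [LinearOrder Q] (v : Q → G) (C : Finset Q) : Fin C.card → G :=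
  fun k => v ((C.sort (· ≤ ·)).get (Fin.cast (Finset.length_sort (s := C) (· ≤ ·)).symm k))

/-- A model of `LKVF`: worlds, an assignment of propositional letters and an
assignment of values to variables. -/
structure Model (P Q G : Type) : Type 1 where
  W : Type
  U : W → P → Prop
  V : W → Q → G

variable [LinearOrder Q]

/-- Truth of a formula at a world of a model, relative to a function domain `F`. -/
def sat (F : FnDom G) (M : Model P Q G) (w : M.W) : Formula P Q → Prop
  | Formula.top => True
  | Formula.atom p => M.U w p
  | Formula.Kv d => ∃ x : G, ∀ w' : M.W, M.V w' d = x
  | Formula.Kf C d =>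
      ∃ f : (Fin C.card → G) → G,
        (⟨C.card, f⟩ : Σ n : ℕ, (Fin n → G) → G) ∈ F ∧
        ∀ w' : M.W, M.V w' d = f (tupleV (M.V w') C)
  | Formula.and φ ψ => sat F M w φ ∧ sat F M w ψ
  | Formula.not φ => ¬ sat F M w φ
  | Formula.K φ => ∀ w' : M.W, sat F M w' φ

/-- Validity over all models built on the value domain `G` and function domain `F`. -/
def Valid (F : FnDom G) (φ : Formula P Q) : Prop :=
  ∀ (M : Model P Q G) (w : M.W), sat F M w φ

/-! STATEMENT 9: properties of the two valuations `u`, `v` built from a maximal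
consistent set in `SLKVF + CHOO + EQU`, over the minimal function domain. -/

/-- The minimal function domain: the projection functions `id_{i,j}`, `0 < i ≤ j`. -/
def Fmin (G : Type) : FnDom G :=
  {p : Σ n : ℕ, (Fin n → G) → G | ∃ k : Fin p.1, p.2 = fun x => x k}

/-- `CHOO : Kf(C,d) → ⋁_{c ∈ C} Kf({c},d)`. -/
def chooF (P Q : Type) [LinearOrder Q] (C : Finset Q) (d : Q) : Formula P Q :=
  Formula.imp (Formula.Kf C d)
    (disj ((C.sort (· ≤ ·)).map fun c => Formula.Kf ({c} : Finset Q) d))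

/-- `EQU : Kf({c},d) → Kf({d},c)`. -/
def equF (P Q : Type) (c d : Q) : Formula P Q :=
  Formula.imp (Formula.Kf ({c} : Finset Q) d) (Formula.Kf ({d} : Finset Q) c)

/-- The axiom system `SLKVF + CHOO + EQU`. -/
def AxMin (P Q : Type) [LinearOrder Q] : Formula P Q → Prop := fun φ =>
  SLKVF P Q φ ∨ (∃ (C : Finset Q) (d : Q), φ = chooF P Q C d) ∨
    (∃ c d : Q, φ = equF P Q c d)


/-! A projection `id_{k}` can only witness `Kf(C,d)` through a single variable `c` of `C`, and
`u`, `v` make `u c = u d` (or `v c = v d`) equivalent to `Kf({c},d) ∈ Γ`. So (3) is CHOO, which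
turns `Kf(C,d) ∈ Γ` into some `Kf({c},d) ∈ Γ` with `c ∈ C`, and (4) is its converse, TRAN with
PROJ. For (1) and (2), `u` and `v` agree on `[d]` iff `[d]` contains a `c'` with `Kv(c') ∈ Γ`,
and then EQU and VF give `Kv(d) ∈ Γ`. -/

namespace MCS

variable {Ax : Formula P Q → Prop} {Γ : Set (Formula P Q)}

section

omit [LinearOrder Q]

theorem mem_of_prov_imp_conj (hΓ : MCS Ax Γ) (hTaut : ∀ φ, IsTaut φ → Ax φ)
    {L : List (Formula P Q)} (hL : ∀ φ ∈ L, φ ∈ Γ) {φ : Formula P Q}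
    (hp : Prov Ax (Formula.imp (conj L) φ)) : φ ∈ Γ := by
  refine (hΓ.2 φ).resolve_right fun hnφ => hΓ.1 ⟨Formula.not φ :: L, ?_, ?_⟩
  · simpa [hnφ] using hL
  · refine Prov.mp (Prov.ax (hTaut _ fun v htop hand hnot => ?_)) hp
    simp only [Formula.imp, Formula.bot, conj, hand, hnot, htop]
    cases v (conj L) <;> cases v φ <;> rfl

theorem mem_of_taut_imp_conj (hΓ : MCS Ax Γ) (hTaut : ∀ φ, IsTaut φ → Ax φ)
    {L : List (Formula P Q)} (hL : ∀ φ ∈ L, φ ∈ Γ) {φ : Formula P Q}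
    (h : IsTaut (Formula.imp (conj L) φ)) : φ ∈ Γ :=
  hΓ.mem_of_prov_imp_conj hTaut hL (Prov.ax (hTaut _ h))

theorem mem_of_prov (hΓ : MCS Ax Γ) (hTaut : ∀ φ, IsTaut φ → Ax φ) {φ : Formula P Q}
    (hp : Prov Ax φ) : φ ∈ Γ := by
  refine hΓ.mem_of_prov_imp_conj hTaut (L := []) (by simp) (Prov.mp (Prov.ax (hTaut _ ?_)) hp)
  intro v htop hand hnot
  simp only [Formula.imp, conj, hand, hnot, htop]
  cases v φ <;> rfl

theorem mem_of_imp_mem (hΓ : MCS Ax Γ) (hTaut : ∀ φ, IsTaut φ → Ax φ) {φ ψ : Formula P Q}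
    (himp : Formula.imp φ ψ ∈ Γ) (hφ : φ ∈ Γ) : ψ ∈ Γ := by
  refine hΓ.mem_of_taut_imp_conj hTaut (L := [Formula.imp φ ψ, φ]) (by simp [himp, hφ]) ?_
  intro v htop hand hnot
  simp only [Formula.imp, conj, hand, hnot, htop]
  cases v φ <;> cases v ψ <;> rfl

theorem and_mem (hΓ : MCS Ax Γ) (hTaut : ∀ φ, IsTaut φ → Ax φ) {φ ψ : Formula P Q}
    (hφ : φ ∈ Γ) (hψ : ψ ∈ Γ) : Formula.and φ ψ ∈ Γ := by
  refine hΓ.mem_of_taut_imp_conj hTaut (L := [φ, ψ]) (by simp [hφ, hψ]) ?_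
  intro v htop hand hnot
  simp only [Formula.imp, conj, hand, hnot, htop]
  cases v φ <;> cases v ψ <;> rfl

theorem and_top_mem (hΓ : MCS Ax Γ) (hTaut : ∀ φ, IsTaut φ → Ax φ) {φ : Formula P Q}
    (hφ : φ ∈ Γ) : Formula.and φ Formula.top ∈ Γ :=
  hΓ.and_mem hTaut hφ (hΓ.mem_of_prov hTaut (Prov.ax (hTaut _ fun _ htop _ _ => htop)))

theorem bot_not_mem (hΓ : MCS Ax Γ) (hTaut : ∀ φ, IsTaut φ → Ax φ) :
    (Formula.bot : Formula P Q) ∉ Γ := by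
  refine fun hbot => hΓ.1 ⟨[Formula.bot], by simpa using hbot, Prov.ax (hTaut _ ?_)⟩
  intro v htop hand hnot
  simp only [Formula.imp, Formula.bot, conj, hand, hnot, htop]
  rfl

theorem mem_or_mem_of_or_mem (hΓ : MCS Ax Γ) (hTaut : ∀ φ, IsTaut φ → Ax φ)
    {φ ψ : Formula P Q} (h : Formula.or φ ψ ∈ Γ) : φ ∈ Γ ∨ ψ ∈ Γ := by
  refine (hΓ.2 φ).imp_right fun hnφ => ?_
  refine hΓ.mem_of_taut_imp_conj hTaut (L := [Formula.or φ ψ, Formula.not φ]) (by simp [h, hnφ]) ?_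
  intro v htop hand hnot
  simp only [Formula.imp, Formula.or, conj, hand, hnot, htop]
  cases v φ <;> cases v ψ <;> rfl

theorem exists_mem_of_disj_mem (hΓ : MCS Ax Γ) (hTaut : ∀ φ, IsTaut φ → Ax φ) :
    ∀ {L : List (Formula P Q)}, disj L ∈ Γ → ∃ φ ∈ L, φ ∈ Γ
  | [], h => absurd h (hΓ.bot_not_mem hTaut)
  | φ :: L, h => by
    rcases hΓ.mem_or_mem_of_or_mem hTaut h with hφ | hL
    · exact ⟨φ, List.mem_cons_self, hφ⟩
    · obtain ⟨ψ, hψL, hψ⟩ := hΓ.exists_mem_of_disj_mem hTaut hL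
      exact ⟨ψ, List.mem_cons_of_mem φ hψL, hψ⟩

theorem kf_singleton_symm (hΓ : MCS Ax Γ) (hTaut : ∀ φ, IsTaut φ → Ax φ)
    (hEQU : ∀ c d : Q, Ax (equF P Q c d)) {c d : Q} (hcd : Formula.Kf {c} d ∈ Γ) :
    Formula.Kf {d} c ∈ Γ :=
  hΓ.mem_of_imp_mem hTaut (hΓ.mem_of_prov hTaut (Prov.ax (hEQU c d))) hcd

end

theorem kf_mem_of_mem (hΓ : MCS Ax Γ) (hSL : ∀ φ, SLKVF P Q φ → Ax φ) {C : Finset Q} {c : Q}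
    (hc : c ∈ C) : Formula.Kf C c ∈ Γ :=
  hΓ.mem_of_prov (fun φ h => hSL φ (SLKVF.taut h)) (Prov.ax (hSL _ (SLKVF.proj hc)))

theorem kv_mem_of_kf_singleton_mem (hΓ : MCS Ax Γ) (hSL : ∀ φ, SLKVF P Q φ → Ax φ) {c d : Q}
    (hc : Formula.Kv c ∈ Γ) (hcd : Formula.Kf {c} d ∈ Γ) : Formula.Kv d ∈ Γ := by
  have hTaut : ∀ φ, IsTaut φ → Ax φ := fun φ h => hSL φ (SLKVF.taut h)
  have hVF := hΓ.mem_of_prov hTaut (Prov.ax (hSL _ (SLKVF.vf {c} d)))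
  rw [finConjKv, Finset.sort_singleton] at hVF
  exact hΓ.mem_of_imp_mem hTaut hVF (hΓ.and_mem hTaut (hΓ.and_top_mem hTaut hc) hcd)

theorem kf_mem_of_kf_singleton_mem (hΓ : MCS Ax Γ) (hSL : ∀ φ, SLKVF P Q φ → Ax φ)
    {C : Finset Q} {c d : Q} (hc : c ∈ C) (hcd : Formula.Kf {c} d ∈ Γ) : Formula.Kf C d ∈ Γ := by
  have hTaut : ∀ φ, IsTaut φ → Ax φ := fun φ h => hSL φ (SLKVF.taut h)
  have hTRAN := hΓ.mem_of_prov hTaut (Prov.ax (hSL _ (SLKVF.tran C {c} d)))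
  rw [finConjKf, Finset.sort_singleton] at hTRAN
  exact hΓ.mem_of_imp_mem hTaut hTRAN
    (hΓ.and_mem hTaut (hΓ.and_top_mem hTaut (hΓ.kf_mem_of_mem hSL hc)) hcd)

theorem exists_kf_singleton_mem (hΓ : MCS Ax Γ) (hTaut : ∀ φ, IsTaut φ → Ax φ)
    (hCHOO : ∀ (C : Finset Q) (d : Q), Ax (chooF P Q C d)) {C : Finset Q} {d : Q}
    (hCd : Formula.Kf C d ∈ Γ) : ∃ c ∈ C, Formula.Kf {c} d ∈ Γ := by
  have hdisj := hΓ.mem_of_imp_mem hTaut (hΓ.mem_of_prov hTaut (Prov.ax (hCHOO C d))) hCd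
  obtain ⟨_, hmem, hcd⟩ := hΓ.exists_mem_of_disj_mem hTaut hdisj
  obtain ⟨c, hc, rfl⟩ := List.mem_map.1 hmem
  exact ⟨c, (Finset.mem_sort _).1 hc, hcd⟩

end MCS

theorem exists_tupleV_eq_of_mem {C : Finset Q} {c : Q} (hc : c ∈ C) :
    ∃ k : Fin C.card, ∀ t : Q → G, tupleV t C k = t c := by
  obtain ⟨n, hn⟩ := List.mem_iff_get.1 ((Finset.mem_sort (· ≤ ·)).2 hc)
  exact ⟨Fin.cast (Finset.length_sort (· ≤ ·)) n, fun t => congrArg t hn⟩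

theorem exists_mem_tupleV_eq (C : Finset Q) (k : Fin C.card) :
    ∃ c ∈ C, ∀ t : Q → G, tupleV t C k = t c :=
  ⟨_, (Finset.mem_sort (· ≤ ·)).1 (List.get_mem _ _), fun _ => rfl⟩

/- `u, v : Q/∼ → G` are encoded as maps `Q → G` that are constant on
`∼`-classes and injective between classes; `V_p(t,d) = t([d])` is then `t d`. -/
theorem statement9_general (P Q G : Type) [LinearOrder Q]
    (Γ : Set (Formula P Q)) (hΓ : MCS (AxMin P Q) Γ)
    (u v : Q → G)
    (hu : ∀ c d : Q, u c = u d ↔ Formula.Kf ({c} : Finset Q) d ∈ Γ)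
    (hv : ∀ c d : Q, v c = v d ↔ Formula.Kf ({c} : Finset Q) d ∈ Γ)
    (huv : ∀ c : Q, u c = v c ↔
      ∃ c' : Q, Formula.Kf ({c} : Finset Q) c' ∈ Γ ∧ Formula.Kv c' ∈ Γ) :
    (∀ d : Q, Formula.Kv d ∈ Γ → ∃ x : G, u d = x ∧ v d = x) ∧
    (∀ d : Q, Formula.Kv d ∉ Γ → u d ≠ v d) ∧
    (∀ (C : Finset Q) (d : Q), Formula.Kf C d ∈ Γ →
      ∃ f : (Fin C.card → G) → G,
        (⟨C.card, f⟩ : Σ n : ℕ, (Fin n → G) → G) ∈ Fmin G ∧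
        f (tupleV u C) = u d ∧ f (tupleV v C) = v d) ∧
    (∀ (C : Finset Q) (d : Q), Formula.Kf C d ∉ Γ →
      ∀ f : (Fin C.card → G) → G,
        (⟨C.card, f⟩ : Σ n : ℕ, (Fin n → G) → G) ∈ Fmin G →
          f (tupleV u C) ≠ u d ∨ f (tupleV v C) ≠ v d) := by
  have hSL : ∀ φ, SLKVF P Q φ → AxMin P Q φ := fun _ => Or.inl
  have hTaut : ∀ φ, IsTaut φ → AxMin P Q φ := fun φ h => hSL φ (SLKVF.taut h)
  have hCHOO : ∀ C d, AxMin P Q (chooF P Q C d) := fun C d => Or.inr (Or.inl ⟨C, d, rfl⟩)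
  have hEQU : ∀ c d, AxMin P Q (equF P Q c d) := fun c d => Or.inr (Or.inr ⟨c, d, rfl⟩)
  refine ⟨fun d hd => ?_, fun d hd huvd => ?_, fun C d hCd => ?_, ?_⟩
  · exact ⟨u d, rfl, ((huv d).2 ⟨d, hΓ.kf_mem_of_mem hSL (Finset.mem_singleton_self d), hd⟩).symm⟩
  · obtain ⟨c', hdc', hc'⟩ := (huv d).1 huvd
    exact hd (hΓ.kv_mem_of_kf_singleton_mem hSL hc' (hΓ.kf_singleton_symm hTaut hEQU hdc'))
  · obtain ⟨c, hc, hcd⟩ := hΓ.exists_kf_singleton_mem hTaut hCHOO hCd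
    obtain ⟨k, hk⟩ := exists_tupleV_eq_of_mem (G := G) hc
    exact ⟨fun x => x k, ⟨k, rfl⟩, (hk u).trans ((hu c d).2 hcd), (hk v).trans ((hv c d).2 hcd)⟩
  · rintro C d hCd f ⟨k, hf⟩
    obtain ⟨c, hc, hk⟩ := exists_mem_tupleV_eq (G := G) C k
    refine Or.inl fun hud => hCd (hΓ.kf_mem_of_kf_singleton_mem hSL hc ((hu c d).1 ?_))
    exact (hk u).symm.trans ((congrFun hf _).symm.trans hud)

theorem statement9 (P Q G : Type) [Countable P] [Infinite P] [LinearOrder Q]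
    (Γ : Set (Formula P Q)) (hΓ : MCS (AxMin P Q) Γ)
    (u v : Q → G)
    (hu : ∀ c d : Q, u c = u d ↔ Formula.Kf ({c} : Finset Q) d ∈ Γ)
    (hv : ∀ c d : Q, v c = v d ↔ Formula.Kf ({c} : Finset Q) d ∈ Γ)
    (huv : ∀ c : Q, u c = v c ↔
      ∃ c' : Q, Formula.Kf ({c} : Finset Q) c' ∈ Γ ∧ Formula.Kv c' ∈ Γ) :
    (∀ d : Q, Formula.Kv d ∈ Γ → ∃ x : G, u d = x ∧ v d = x) ∧
    (∀ d : Q, Formula.Kv d ∉ Γ → u d ≠ v d) ∧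
    (∀ (C : Finset Q) (d : Q), Formula.Kf C d ∈ Γ →
      ∃ f : (Fin C.card → G) → G,
        (⟨C.card, f⟩ : Σ n : ℕ, (Fin n → G) → G) ∈ Fmin G ∧
        f (tupleV u C) = u d ∧ f (tupleV v C) = v d) ∧
    (∀ (C : Finset Q) (d : Q), Formula.Kf C d ∉ Γ →
      ∀ f : (Fin C.card → G) → G,
        (⟨C.card, f⟩ : Σ n : ℕ, (Fin n → G) → G) ∈ Fmin G →
          f (tupleV u C) ≠ u d ∨ f (tupleV v C) ≠ v d) :=
  statement9_general P Q G Γ hΓ u v hu hv huv
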